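/- arXiv:1703.08978 — 4 statements merged into one kernel-verified Lean document; each statement's English description precedes it below -/
import Mathlib

section
/- Let E be a measure space, H ⊆ L²(E, μ) a closed subspace with orthogonal projection K, and C ⊆ E measurable with ‖χ_C K‖ < 1. Then for any closed subspace S ⊆ H, the linear subspace χ_{E∖C} S = { χ_{E∖C} · f : f ∈ S } is closed in L²(E, μ). -/
/-!
Since `χ_C + χ_{E∖C} = 1` and `K f = f` on `H`, every `f ∈ H` satisfies
`‖f‖ ≤ ‖χ_C K f‖ + ‖χ_{E∖C} f‖ ≤ ‖χ_C K‖ ‖f‖ + ‖χ_{E∖C} f‖`, so `χ_{E∖C}` is bounded below on `H`.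
An operator bounded below on a closed subspace is antilipschitz there, hence maps it onto a
complete, thus closed, set.
-/

open MeasureTheory
open scoped ENNReal NNReal

theorem MeasureTheory.Lp.add_eq_of_ae_eq_indicator_compl {α F : Type*} [MeasurableSpace α]
    {μ : Measure α} [NormedAddCommGroup F] {p : ℝ≥0∞} {s : Set α} {f g h : Lp F p μ}
    (hg : g =ᵐ[μ] s.indicator f) (hh : h =ᵐ[μ] sᶜ.indicator f) : g + h = f := by
  ext1
  filter_upwards [Lp.coeFn_add g h, hg, hh] with x hadd hgx hhx
  rw [hadd, Pi.add_apply, hgx, hhx, Set.indicator_self_add_compl_apply]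

theorem norm_le_of_norm_sub_le_mul {E : Type*} [SeminormedAddCommGroup E] {x y : E} {c : ℝ}
    (hc : c < 1) (h : ‖x - y‖ ≤ c * ‖x‖) : ‖x‖ ≤ (1 - c)⁻¹ * ‖y‖ := by
  rw [le_inv_mul_iff₀ (sub_pos.mpr hc)]
  have := norm_sub_norm_le x y
  nlinarith

theorem ContinuousLinearMap.isClosed_image_of_norm_le_mul {𝕜 E F : Type*}
    [NontriviallyNormedField 𝕜] [NormedAddCommGroup E] [NormedSpace 𝕜 E] [CompleteSpace E]
    [NormedAddCommGroup F] [NormedSpace 𝕜 F] (g : E →L[𝕜] F) {S : Submodule 𝕜 E}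
    (hS : IsClosed (S : Set E)) {K : ℝ≥0} (hK : ∀ x ∈ S, ‖x‖ ≤ K * ‖g x‖) :
    IsClosed (g '' S) := by
  have : CompleteSpace S := hS.completeSpace_coe
  have hanti : AntilipschitzWith K (g.comp S.subtypeL) :=
    (g.comp S.subtypeL).antilipschitz_of_bound fun x => hK x x.2
  rw [← Subtype.range_coe (s := (S : Set E)), ← Set.range_comp]
  exact hanti.isClosed_range (g.comp S.subtypeL).uniformContinuous

theorem image_of_closed_subspace_closed_general
    {E : Type*} [MeasurableSpace E] (μ : Measure E)
    (H : Submodule ℂ (Lp ℂ 2 μ)) [CompleteSpace H]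
    (C : Set E)
    (MC MCc : Lp ℂ 2 μ →L[ℂ] Lp ℂ 2 μ)
    (hMC : ∀ f : Lp ℂ 2 μ, ⇑(MC f) =ᵐ[μ] C.indicator ⇑f)
    (hMCc : ∀ f : Lp ℂ 2 μ, ⇑(MCc f) =ᵐ[μ] Cᶜ.indicator ⇑f)
    (hlt : ‖MC.comp (H.subtypeL.comp (H.orthogonalProjection))‖ < 1)
    (S : Submodule ℂ (Lp ℂ 2 μ)) (hSH : S ≤ H)
    (hSclosed : IsClosed (S : Set (Lp ℂ 2 μ))) :
    IsClosed (MCc '' (S : Set (Lp ℂ 2 μ))) := by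
  set T := MC.comp (H.subtypeL.comp H.orthogonalProjectionOnto)
  have hMC_eq : ∀ f ∈ H, MC f = T f := fun f hf => by
    simp [T, Submodule.starProjection_eq_self_iff.mpr hf]
  refine MCc.isClosed_image_of_norm_le_mul hSclosed (K := ⟨(1 - ‖T‖)⁻¹, by simp [hlt.le]⟩)
    fun f hf => norm_le_of_norm_sub_le_mul hlt ?_
  have hsplit : f - MCc f = MC f :=
    sub_eq_of_eq_add (Lp.add_eq_of_ae_eq_indicator_compl (hMC f) (hMCc f)).symm
  rw [hsplit, hMC_eq f (hSH hf)]
  exact T.le_opNorm f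

/-- Let `H ⊆ L²(E, μ)` be a closed subspace with orthogonal projection `K`,
and `C ⊆ E` measurable with `‖χ_C K‖ < 1`. Then for any closed subspace `S ⊆ H`, the linear
subspace `χ_{E∖C} S = { χ_{E∖C}·f : f ∈ S }` is closed in `L²(E, μ)`. -/
theorem image_of_closed_subspace_closed
    {E : Type*} [MeasurableSpace E] (μ : Measure E) [SigmaFinite μ]
    (H : Submodule ℂ (Lp ℂ 2 μ)) [CompleteSpace H]
    (C : Set E) (hC : MeasurableSet C)
    (MC MCc : Lp ℂ 2 μ →L[ℂ] Lp ℂ 2 μ)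
    (hMC : ∀ f : Lp ℂ 2 μ, ⇑(MC f) =ᵐ[μ] C.indicator ⇑f)
    (hMCc : ∀ f : Lp ℂ 2 μ, ⇑(MCc f) =ᵐ[μ] Cᶜ.indicator ⇑f)
    (hlt : ‖MC.comp (H.subtypeL.comp (H.orthogonalProjection))‖ < 1)
    (S : Submodule ℂ (Lp ℂ 2 μ)) (hSH : S ≤ H)
    (hSclosed : IsClosed (S : Set (Lp ℂ 2 μ))) :
    IsClosed (MCc '' (S : Set (Lp ℂ 2 μ))) :=
  image_of_closed_subspace_closed_general μ H C MC MCc hMC hMCc hlt S hSH hSclosed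
end

section
/- Let H ⊆ L²(E, μ) be a linear subspace that is a module over a subalgebra A ⊆ L^∞(E, μ). Suppose h ∈ H, B ⊆ E is measurable, ‖χ_B h‖₂ ≠ 0, and A contains an element whose restriction to every positive-measure subset of { x ∈ B : h(x) ≠ 0 } is not an elementary step function. Then the linear span of { χ_B · h · a : a ∈ A } is infinite-dimensional. -/
/-!
If the span were finite-dimensional, the classes of `χ_B h a^(k+1)`, `k ∈ ℕ`, would be linearly
dependent, so `χ_B h · q(a) = 0` a.e. for a nonzero polynomial `q` with `q(0) = 0`. On a
positive-measure set `C ⊆ {x ∈ B | h x ≠ 0}` this forces `a` to take values a.e. among the finitely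
many roots of `q`, i.e. `a` is an elementary step function on `C`.
-/

open MeasureTheory Polynomial

theorem Polynomial.exists_finset_eventually_mem_of_eventually_eval_eq_zero
    {α R : Type*} [CommRing R] [IsDomain R] {l : Filter α} {p : R[X]} (hp : p ≠ 0) {f : α → R}
    (hf : ∀ᶠ x in l, p.eval (f x) = 0) : ∃ F : Finset R, ∀ᶠ x in l, f x ∈ F := by
  classical
  exact ⟨p.roots.toFinset, hf.mono fun x hx => by simpa [mem_roots hp] using hx⟩

section

variable {E : Type*} [MeasurableSpace E] {μ : Measure E}

theorem exists_measurableSet_subset_pos_of_not_indicator_ae_eq_zero {β : Type*} [Zero β]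
    [MeasurableSpace β] [MeasurableSingletonClass β] {h : E → β} (hh : NullMeasurable h μ)
    {B : Set E} (hB : NullMeasurableSet B μ) (hnz : ¬ B.indicator h =ᵐ[μ] 0) :
    ∃ C, MeasurableSet C ∧ C ⊆ {x ∈ B | h x ≠ 0} ∧ 0 < μ C := by
  have hS : NullMeasurableSet {x ∈ B | h x ≠ 0} μ :=
    hB.inter (hh (measurableSet_singleton 0).compl)
  obtain ⟨C, hCS, hCm, hCeq⟩ := hS.exists_measurable_subset_ae_eq
  refine ⟨C, hCm, hCS, ?_⟩
  rw [measure_congr hCeq, pos_iff_ne_zero]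
  intro h0
  refine hnz ((measure_eq_zero_iff_ae_notMem.1 h0).mono fun x hx => ?_)
  simpa [Set.indicator_apply_eq_zero] using hx

theorem linearIndependent_of_coeFn_ae_eq_mul_pow_succ {K : Type*} [Field K] [TopologicalSpace K]
    [IsTopologicalRing K] {v : ℕ → E →ₘ[μ] K} {g a : E → K}
    (hv : ∀ k, ⇑(v k) =ᵐ[μ] g * a ^ (k + 1)) {C : Set E} (hC : MeasurableSet C)
    (hgC : ∀ x ∈ C, g x ≠ 0) (ha : ¬ ∃ F : Finset K, ∀ᵐ x ∂μ.restrict C, a x ∈ F) :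
    LinearIndependent K v := by
  rw [linearIndependent_iff']
  intro s c hsum i hi
  set p : K[X] := ∑ j ∈ s, monomial j (c j)
  have hrel : ∀ᵐ x ∂μ, g x * (X * p).eval (a x) = 0 := by
    filter_upwards [AEEqFun.coeFn_finsetSum s (fun j => c j • v j),
      ae_all_iff.2 fun j => AEEqFun.coeFn_smul (c j) (v j), ae_all_iff.2 hv,
      AEEqFun.coeFn_zero (μ := μ) (β := K)] with x hsum_x hsmul_x hv_x hzero_x
    calc g x * (X * p).eval (a x) = ∑ j ∈ s, c j * (g x * a x ^ (j + 1)) := by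
          simp only [p, eval_mul, eval_X, eval_finsetSum, eval_monomial, Finset.mul_sum]
          exact Finset.sum_congr rfl fun j _ => by ring
      _ = (⇑(∑ j ∈ s, c j • v j)) x := by simp [hsum_x, hsmul_x, hv_x]
      _ = 0 := by rw [hsum, hzero_x]; rfl
  have hroot : ∀ᵐ x ∂μ.restrict C, (X * p).eval (a x) = 0 := by
    rw [ae_restrict_iff' hC]
    filter_upwards [hrel] with x hx hxC
    exact (mul_eq_zero.1 hx).resolve_left (hgC x hxC)
  have hp : p = 0 := by
    by_contra hp
    exact ha (exists_finset_eventually_mem_of_eventually_eval_eq_zero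
      (mul_ne_zero X_ne_zero hp) hroot)
  simpa [p, finsetSum_coeff, coeff_monomial, hi] using congrArg (coeff · i) hp

end

theorem module_span_infinite_dimensional_general
    {E : Type*} [MeasurableSpace E] (μ : Measure E)
    (A : Set (E → ℂ))
    (hmul : ∀ a ∈ A, ∀ b ∈ A, a * b ∈ A)
    (H : Set (E → ℂ))
    (hH2 : ∀ g ∈ H, MemLp g 2 μ)
    (h : E → ℂ) (hh : h ∈ H)
    (B : Set E) (hB : MeasurableSet B)
    (hnz : eLpNorm (B.indicator h) 2 μ ≠ 0)
    (hmeas : ∀ a ∈ A, AEStronglyMeasurable (B.indicator (h * a)) μ)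
    (ha : ∃ a ∈ A, ∀ C : Set E, MeasurableSet C → C ⊆ {x ∈ B | h x ≠ 0} → 0 < μ C →
      ¬ ∃ F : Finset ℂ, ∀ᵐ x ∂μ.restrict C, a x ∈ F) :
    ¬ FiniteDimensional ℂ
      ↥(Submodule.span ℂ
        {f : E →ₘ[μ] ℂ | ∃ a ∈ A, ⇑f =ᵐ[μ] B.indicator (h * a)}) := by
  obtain ⟨a, haA, ha⟩ := ha
  have hpow : ∀ k : ℕ, a ^ (k + 1) ∈ A := by
    intro k
    induction k with
    | zero => simpa using haA
    | succ k ih => rw [pow_succ]; exact hmul _ ih _ haA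
  obtain ⟨C, hCm, hCsub, hCpos⟩ := exists_measurableSet_subset_pos_of_not_indicator_ae_eq_zero
    (hH2 h hh).aestronglyMeasurable.aemeasurable.nullMeasurable hB.nullMeasurableSet
    fun h0 => hnz (by rw [eLpNorm_congr_ae h0, eLpNorm_zero])
  set S := Submodule.span ℂ {f : E →ₘ[μ] ℂ | ∃ a ∈ A, ⇑f =ᵐ[μ] B.indicator (h * a)}
  let v : ℕ → S := fun k =>
    ⟨AEEqFun.mk _ (hmeas _ (hpow k)), Submodule.subset_span ⟨_, hpow k, AEEqFun.coeFn_mk _ _⟩⟩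
  have hv : ∀ k, ⇑(S.subtype (v k)) =ᵐ[μ] B.indicator h * a ^ (k + 1) := fun k =>
    (AEEqFun.coeFn_mk _ _).trans (.of_eq (funext fun x => Set.indicator_mul_left _ _ _))
  have hli : LinearIndependent ℂ (S.subtype ∘ v) :=
    linearIndependent_of_coeFn_ae_eq_mul_pow_succ hv hCm
      (fun x hx => by simpa [Set.indicator_of_mem (hCsub hx).1] using (hCsub hx).2)
      (ha C hCm hCsub hCpos)
  intro hfin
  exact Module.Finite.not_linearIndependent_of_infinite v hli.of_comp

/-- Let `H ⊆ L²(E, μ)` be a linear subspace which is a module over a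
subalgebra `A ⊆ L^∞(E, μ)`. Suppose `h ∈ H`, `B` is measurable, `‖χ_B h‖₂ ≠ 0`, and `A`
contains an element whose restriction to every positive-measure subset of
`{x ∈ B : h x ≠ 0}` is not an elementary step function. Then the span of
`{ χ_B·h·a : a ∈ A }` (in a.e.-equivalence classes) is infinite-dimensional. -/
theorem module_span_infinite_dimensional
    {E : Type*} [MeasurableSpace E] (μ : Measure E)
    (A : Set (E → ℂ))
    (hmul : ∀ a ∈ A, ∀ b ∈ A, a * b ∈ A)
    (hadd : ∀ a ∈ A, ∀ b ∈ A, a + b ∈ A)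
    (hsmul : ∀ (c : ℂ), ∀ a ∈ A, c • a ∈ A)
    (hbdd : ∀ a ∈ A, ∃ M : ℝ, ∀ᵐ x ∂μ, ‖a x‖ ≤ M)
    (H : Set (E → ℂ))
    (hH2 : ∀ g ∈ H, MemLp g 2 μ)
    (hmod : ∀ a ∈ A, ∀ g ∈ H, a * g ∈ H)
    (h : E → ℂ) (hh : h ∈ H)
    (B : Set E) (hB : MeasurableSet B)
    (hnz : eLpNorm (B.indicator h) 2 μ ≠ 0)
    (hmeas : ∀ a ∈ A, AEStronglyMeasurable (B.indicator (h * a)) μ)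
    (ha : ∃ a ∈ A, ∀ C : Set E, MeasurableSet C → C ⊆ {x ∈ B | h x ≠ 0} → 0 < μ C →
      ¬ ∃ F : Finset ℂ, ∀ᵐ x ∂μ.restrict C, a x ∈ F) :
    ¬ FiniteDimensional ℂ
      ↥(Submodule.span ℂ
        {f : E →ₘ[μ] ℂ | ∃ a ∈ A, ⇑f =ᵐ[μ] B.indicator (h * a)}) :=
  module_span_infinite_dimensional_general μ A hmul H hH2 h hh B hB hnz hmeas ha
end

section
/- Let E be a locally compact Polish space with Radon measure μ of full support, and let H ⊆ L²(E, μ) be a reproducing kernel Hilbert space with the unique extension property: for any measurable C with μ(C) > 0, any φ ∈ H vanishing μ-a.e. on C vanishes identically. Assume E is non-compact, dim H = ∞, and the reproducing kernel K (the orthogonal projection onto H) is locally of trace class. Then for every relatively compact Borel subset B ⊆ E, the operator χ_B K has operator norm strictly less than 1. -/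
/-!
Write `P` for the projection onto `H` and `Q = χ_B`. Then `Q P Q = (Q P) (Q P)*` is a positive
compact operator of norm `‖Q P‖²`, so if `‖Q P‖ = 1` then `1` lies in its spectrum and, by the
Fredholm alternative, is an eigenvalue. An eigenvector of `Q P Q` for `1` is fixed by both `Q`
and `P`: it is an element of `H` vanishing on `Bᶜ`, which has positive measure because
`closure B` is compact while `E` is not. The unique extension property makes it zero.
-/

section StarProjection

variable {𝕜 V : Type*} [RCLike 𝕜] [NormedAddCommGroup V] [InnerProductSpace 𝕜 V] [CompleteSpace V]

theorem IsStarProjection.norm_apply_le {p : V →L[𝕜] V} (hp : IsStarProjection p) (x : V) :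
    ‖p x‖ ≤ ‖x‖ := by
  simpa using p.le_of_opNorm_le (hp.norm_le p) x

theorem IsStarProjection.apply_eq_self_of_norm_apply_eq {p : V →L[𝕜] V} (hp : IsStarProjection p)
    {x : V} (h : ‖p x‖ = ‖x‖) : p x = x := by
  obtain ⟨K, _, rfl⟩ := isStarProjection_iff_eq_starProjection.mp hp
  exact K.starProjection_eq_self_iff.mpr ((K.mem_iff_norm_starProjection x).mpr h)

/-- `‖q (p y)‖ = ‖y‖ ≥ ‖p y‖` forces `p y` into the range of `q`. -/
theorem IsStarProjection.apply_eq_self_of_mul_mul_apply_eq_self {p q : V →L[𝕜] V}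
    (hp : IsStarProjection p) (hq : IsStarProjection q) {y : V} (hy : (q * p * q) y = y) :
    p y = y ∧ q y = y := by
  have hqy : q y = y := by
    have hq_mul : q * (q * p * q) = q * p * q := by
      rw [← mul_assoc, ← mul_assoc, hq.isIdempotentElem.eq]
    calc q y = (q * (q * p * q)) y := congrArg q hy.symm
      _ = (q * p * q) y := by rw [hq_mul]
      _ = y := hy
  have hqpy : q (p y) = y := by simpa [hqy] using hy
  have hnorm : ‖q (p y)‖ = ‖p y‖ :=
    le_antisymm (hq.norm_apply_le _) (by simpa [hqpy] using hp.norm_apply_le y)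
  exact ⟨(hq.apply_eq_self_of_norm_apply_eq hnorm).symm.trans hqpy, hqy⟩

end StarProjection

section CStar

variable {V : Type*} [NormedAddCommGroup V] [InnerProductSpace ℂ V] [CompleteSpace V]

theorem IsStarProjection.norm_mul_lt_one {p q : V →L[ℂ] V} (hp : IsStarProjection p)
    (hq : IsStarProjection q) (hcpt : IsCompactOperator (q * p * q))
    (hfix : ∀ y, p y = y → q y = y → y = 0) : ‖q * p‖ < 1 := by
  refine lt_of_le_of_ne ((norm_mul_le q p).trans
    (mul_le_one₀ (hq.norm_le q) (norm_nonneg p) (hp.norm_le p))) fun hone => ?_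
  have hstar : q * p * q = (q * p) * star (q * p) := by
    rw [star_mul, hp.isSelfAdjoint.star_eq, hq.isSelfAdjoint.star_eq, ← mul_assoc,
      mul_assoc q p p, hp.isIdempotentElem.eq]
  have hnorm : ‖q * p * q‖ = 1 := by rw [hstar, CStarRing.norm_self_mul_star, hone, one_mul]
  have : Nontrivial (V →L[ℂ] V) :=
    nontrivial_of_ne (q * p * q) 0 (norm_ne_zero_iff.mp (by simp [hnorm]))
  have hspec : (1 : ℂ) ∈ spectrum ℂ (q * p * q) := by
    have := CStarAlgebra.norm_mem_spectrum_of_nonneg (hstar ▸ mul_star_self_nonneg (q * p))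
    simpa [hnorm] using spectrum.algebraMap_mem ℂ this
  obtain ⟨y, hy⟩ :=
    ((hcpt.hasEigenvalue_iff_mem_spectrum one_ne_zero).mpr hspec).exists_hasEigenvector
  obtain ⟨hpy, hqy⟩ :=
    hp.apply_eq_self_of_mul_mul_apply_eq_self hq (by simpa using hy.apply_eq_smul)
  exact hy.2 (hfix y hpy hqy)

end CStar

namespace MeasureTheory

variable {α : Type*} [MeasurableSpace α] {μ : Measure α}

theorem L2.isStarProjection_of_ae_eq_indicator {𝕜 : Type*} [RCLike 𝕜] {B : Set α}
    {Q : Lp 𝕜 2 μ →L[𝕜] Lp 𝕜 2 μ} (hQ : ∀ f, Q f =ᵐ[μ] B.indicator f) : IsStarProjection Q where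
  isIdempotentElem := ContinuousLinearMap.ext fun f => Lp.ext <| by
    filter_upwards [hQ (Q f), hQ f] with x hQQ hQf
    by_cases hx : x ∈ B <;> simp [hQQ, hQf, hx]
  isSelfAdjoint := ContinuousLinearMap.isSelfAdjoint_iff_isSymmetric.mpr fun f g => by
    simp only [ContinuousLinearMap.coe_coe, L2.inner_def]
    refine integral_congr_ae ?_
    filter_upwards [hQ f, hQ g] with x hQf hQg
    by_cases hx : x ∈ B <;> simp [hQf, hQg, hx]

theorem measure_compl_pos_of_isCompact_closure [TopologicalSpace α] [μ.IsOpenPosMeasure]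
    (hnc : ¬ IsCompact (Set.univ : Set α)) {B : Set α} (hB : IsCompact (closure B)) :
    0 < μ Bᶜ := by
  have hne : (closure B)ᶜ.Nonempty := by
    rw [Set.nonempty_compl]
    rintro hB_univ
    exact hnc (hB_univ ▸ hB)
  exact (isClosed_closure.isOpen_compl.measure_pos μ hne).trans_le
    (measure_mono (Set.compl_subset_compl.mpr subset_closure))

end MeasureTheory

open MeasureTheory

theorem strict_contractivity_of_localized_projection_general
    {E : Type*} [TopologicalSpace E] [MeasurableSpace E] (μ : Measure E)
    (hsupp : ∀ O : Set E, IsOpen O → O.Nonempty → 0 < μ O)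
    (hnc : ¬ IsCompact (Set.univ : Set E))
    (H : Submodule ℂ (Lp ℂ 2 μ)) [CompleteSpace H]
    (huep : ∀ C : Set E, MeasurableSet C → 0 < μ C → ∀ f : Lp ℂ 2 μ, f ∈ H →
      (∀ᵐ x ∂μ.restrict C, f x = 0) → f = 0)
    (M : Set E → (Lp ℂ 2 μ →L[ℂ] Lp ℂ 2 μ))
    (hM : ∀ A : Set E, MeasurableSet A → ∀ f : Lp ℂ 2 μ, ⇑(M A f) =ᵐ[μ] A.indicator ⇑f)
    (htc : ∀ B : Set E, MeasurableSet B → IsCompact (closure B) →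
      IsCompactOperator
        ((M B).comp ((H.subtypeL.comp H.orthogonalProjectionOnto).comp (M B)))) :
    ∀ B : Set E, MeasurableSet B → IsCompact (closure B) →
      ‖(M B).comp (H.subtypeL.comp H.orthogonalProjectionOnto)‖ < 1 := by
  intro B hB hB_closure
  have : μ.IsOpenPosMeasure := ⟨fun U hU hne => (hsupp U hU hne).ne'⟩
  have hcpt : IsCompactOperator (M B * H.starProjection * M B) := by
    rw [mul_assoc]
    exact htc B hB hB_closure
  refine isStarProjection_starProjection.norm_mul_lt_one
    (L2.isStarProjection_of_ae_eq_indicator (hM B hB)) hcpt fun y hyH hyB => ?_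
  have hy_indicator := hM B hB y
  rw [hyB] at hy_indicator
  exact huep Bᶜ hB.compl (measure_compl_pos_of_isCompact_closure hnc hB_closure) y
    (H.starProjection_eq_self_iff.mp hyH)
    ((hy_indicator.filter_mono ae_restrict_le).trans (indicator_ae_eq_restrict_compl hB))

/-- Let `E` be a locally compact Polish space with a Radon measure `μ` of
full support, and `H ⊆ L²(E, μ)` a reproducing kernel Hilbert space (a closed subspace, with
`K` the orthogonal projection onto it, locally of trace class — here: `χ_B K χ_B` compact for
all relatively compact Borel `B`) with the unique extension property, `E` non-compact and
`dim H = ∞`. Then for every relatively compact Borel `B ⊆ E`, `‖χ_B K‖ < 1`. -/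
theorem strict_contractivity_of_localized_projection
    {E : Type*} [TopologicalSpace E] [PolishSpace E] [LocallyCompactSpace E]
    [MeasurableSpace E] [BorelSpace E]
    (μ : Measure E) [μ.Regular] [SigmaFinite μ]
    (hsupp : ∀ O : Set E, IsOpen O → O.Nonempty → 0 < μ O)
    (hnc : ¬ IsCompact (Set.univ : Set E))
    (H : Submodule ℂ (Lp ℂ 2 μ)) [CompleteSpace H]
    (hdim : ¬ FiniteDimensional ℂ H)
    (huep : ∀ C : Set E, MeasurableSet C → 0 < μ C → ∀ f : Lp ℂ 2 μ, f ∈ H →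
      (∀ᵐ x ∂μ.restrict C, f x = 0) → f = 0)
    (M : Set E → (Lp ℂ 2 μ →L[ℂ] Lp ℂ 2 μ))
    (hM : ∀ A : Set E, MeasurableSet A → ∀ f : Lp ℂ 2 μ, ⇑(M A f) =ᵐ[μ] A.indicator ⇑f)
    (htc : ∀ B : Set E, MeasurableSet B → IsCompact (closure B) →
      IsCompactOperator
        ((M B).comp ((H.subtypeL.comp H.orthogonalProjectionOnto).comp (M B)))) :
    ∀ B : Set E, MeasurableSet B → IsCompact (closure B) →
      ‖(M B).comp (H.subtypeL.comp H.orthogonalProjectionOnto)‖ < 1 :=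
  strict_contractivity_of_localized_projection_general μ hsupp hnc H huep M hM htc
end

section
/- Let E be a measure space, H ⊆ L²(E, μ) a closed subspace with orthogonal projection K, and B a measurable set such that χ_B K χ_B is compact. If ‖χ_B K‖ = 1, then there exists a nonzero ψ ∈ H such that χ_B K (χ_{E∖B} ψ) = 0 and χ_B ψ ≠ 0. -/
/-!
Write `Q = χ_B` and `P = K`. The operator `QPQ = (QP)(QP)*` is positive, compact and has norm
`‖QP‖² = 1`, so `1` lies in its spectrum and, by the Fredholm alternative, is an eigenvalue:
`QPQ y = y` for some `y ≠ 0`. Then `Qy = y`, and `ψ = Py` satisfies `Qψ = y ≠ 0` and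
`QP(1 - Q)ψ = QPy - QPy = 0`.
-/

open MeasureTheory

section IndicatorOperator

variable {𝕜 E : Type*} [RCLike 𝕜] [MeasurableSpace E] {μ : Measure E} {B : Set E}
  {M : Lp 𝕜 2 μ →L[𝕜] Lp 𝕜 2 μ}

theorem isStarProjection_of_ae_eq_indicator (hM : ∀ f : Lp 𝕜 2 μ, ⇑(M f) =ᵐ[μ] B.indicator ⇑f) :
    IsStarProjection M := by
  refine ⟨ContinuousLinearMap.ext fun f => Lp.ext ?_,
    ContinuousLinearMap.isSelfAdjoint_iff_isSymmetric.mpr fun f g => ?_⟩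
  · filter_upwards [hM (M f), hM f] with a hMMf hMf
    by_cases ha : a ∈ B <;> simp [mul_apply_eq_comp, hMMf, hMf, ha]
  · simp only [ContinuousLinearMap.coe_coe, L2.inner_def]
    refine integral_congr_ae ?_
    filter_upwards [hM f, hM g] with a hMf hMg
    by_cases ha : a ∈ B <;> simp [hMf, hMg, ha]

theorem apply_eq_sub_of_ae_eq_indicator_compl {M' : Lp 𝕜 2 μ →L[𝕜] Lp 𝕜 2 μ}
    (hM : ∀ f : Lp 𝕜 2 μ, ⇑(M f) =ᵐ[μ] B.indicator ⇑f)
    (hM' : ∀ f : Lp 𝕜 2 μ, ⇑(M' f) =ᵐ[μ] Bᶜ.indicator ⇑f) (f : Lp 𝕜 2 μ) :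
    M' f = f - M f := by
  refine Lp.ext ?_
  filter_upwards [hM' f, hM f, Lp.coeFn_sub f (M f)] with a hM'f hMf hsub
  rw [hM'f, hsub, Pi.sub_apply, hMf, Set.indicator_compl, Pi.sub_apply]

end IndicatorOperator

theorem IsCompactOperator.hasEigenvalue_norm_of_nonneg {F : Type*} [NormedAddCommGroup F]
    [InnerProductSpace ℂ F] [CompleteSpace F] {T : F →L[ℂ] F} (hT : IsCompactOperator T)
    (hT₀ : 0 ≤ T) (hT₁ : T ≠ 0) : Module.End.HasEigenvalue (T : Module.End ℂ F) ‖T‖ := by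
  have : Nontrivial (F →L[ℂ] F) := ⟨T, 0, hT₁⟩
  rw [hT.hasEigenvalue_iff_mem_spectrum (by simpa using hT₁)]
  exact spectrum.algebraMap_mem ℂ (CStarAlgebra.norm_mem_spectrum_of_nonneg hT₀)

theorem IsStarProjection.exists_ne_zero_apply_apply_eq_self {F : Type*} [NormedAddCommGroup F]
    [InnerProductSpace ℂ F] [CompleteSpace F] {P Q : F →L[ℂ] F} (hP : IsStarProjection P)
    (hQ : IsStarProjection Q) (hcomp : IsCompactOperator (Q ∘L P ∘L Q)) (hnorm : ‖Q ∘L P‖ = 1) :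
    ∃ y ≠ 0, Q (P y) = y := by
  have hT : Q ∘L P ∘L Q = Q * P * star (Q * P) := by
    rw [star_mul, hP.isSelfAdjoint.star_eq, hQ.isSelfAdjoint.star_eq, mul_assoc, ← mul_assoc P,
      hP.isIdempotentElem.eq]
    rfl
  have hT₁ : ‖Q ∘L P ∘L Q‖ = 1 := by
    rw [hT, CStarRing.norm_self_mul_star]
    simp [ContinuousLinearMap.mul_def, hnorm]
  obtain ⟨y, hy⟩ := (hcomp.hasEigenvalue_norm_of_nonneg (hT ▸ mul_star_self_nonneg _)
    (fun h => by simp [h] at hT₁)).exists_hasEigenvector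
  have hTy : Q (P (Q y)) = y := by simpa [hT₁] using hy.apply_eq_smul
  have hQy : Q y = y := by
    rw [← hTy, ← mul_apply_eq_comp Q Q, hQ.isIdempotentElem.eq]
  exact ⟨y, hy.2, by rw [← hQy, hTy, hQy]⟩

theorem norm_one_yields_special_vector_general
    {E : Type*} [MeasurableSpace E] (μ : Measure E)
    (H : Submodule ℂ (Lp ℂ 2 μ)) [CompleteSpace H]
    (B : Set E)
    (MB MBc : Lp ℂ 2 μ →L[ℂ] Lp ℂ 2 μ)
    (hMB : ∀ f : Lp ℂ 2 μ, ⇑(MB f) =ᵐ[μ] B.indicator ⇑f)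
    (hMBc : ∀ f : Lp ℂ 2 μ, ⇑(MBc f) =ᵐ[μ] Bᶜ.indicator ⇑f)
    (hcomp : IsCompactOperator
      (MB.comp ((H.subtypeL.comp (H.orthogonalProjectionOnto)).comp MB)))
    (hnorm : ‖MB.comp (H.subtypeL.comp (H.orthogonalProjectionOnto))‖ = 1) :
    ∃ ψ : Lp ℂ 2 μ, ψ ∈ H ∧ ψ ≠ 0 ∧
      MB ((H.subtypeL.comp (H.orthogonalProjectionOnto)) (MBc ψ)) = 0 ∧ MB ψ ≠ 0 := by
  obtain ⟨y, hy₀, hy⟩ := isStarProjection_starProjection.exists_ne_zero_apply_apply_eq_self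
    (isStarProjection_of_ae_eq_indicator hMB) hcomp hnorm
  refine ⟨H.starProjection y, H.starProjection_apply_mem y, fun h => hy₀ ?_, ?_, by rwa [hy]⟩
  · rw [← hy, h, map_zero]
  · change MB (H.starProjection (MBc (H.starProjection y))) = 0
    rw [apply_eq_sub_of_ae_eq_indicator_compl hMB hMBc, hy, map_sub,
      H.starProjection_eq_self_iff.mpr (H.starProjection_apply_mem y), sub_self, map_zero]

/-- Let `H ⊆ L²(E, μ)` be a closed subspace with orthogonal projection
`K`, and `B` measurable with `χ_B K χ_B` compact. If `‖χ_B K‖ = 1`, then there is a nonzero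
`ψ ∈ H` with `χ_B K (χ_{E∖B} ψ) = 0` and `χ_B ψ ≠ 0`. -/
theorem norm_one_yields_special_vector
    {E : Type*} [MeasurableSpace E] (μ : Measure E) [SigmaFinite μ]
    (H : Submodule ℂ (Lp ℂ 2 μ)) [CompleteSpace H]
    (B : Set E) (hB : MeasurableSet B)
    (MB MBc : Lp ℂ 2 μ →L[ℂ] Lp ℂ 2 μ)
    (hMB : ∀ f : Lp ℂ 2 μ, ⇑(MB f) =ᵐ[μ] B.indicator ⇑f)
    (hMBc : ∀ f : Lp ℂ 2 μ, ⇑(MBc f) =ᵐ[μ] Bᶜ.indicator ⇑f)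
    (hcomp : IsCompactOperator
      (MB.comp ((H.subtypeL.comp (H.orthogonalProjectionOnto)).comp MB)))
    (hnorm : ‖MB.comp (H.subtypeL.comp (H.orthogonalProjectionOnto))‖ = 1) :
    ∃ ψ : Lp ℂ 2 μ, ψ ∈ H ∧ ψ ≠ 0 ∧
      MB ((H.subtypeL.comp (H.orthogonalProjectionOnto)) (MBc ψ)) = 0 ∧ MB ψ ≠ 0 :=
  norm_one_yields_special_vector_general μ H B MB MBc hMB hMBc hcomp hnorm
end
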